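/- Let Q ∈ ℝ^{n×n} be symmetric positive definite and a ∈ ℝ^n, and set κ = aᵀQ⁻¹a. Then the set T = {(x, z, t) ∈ ℝ^n × [0,1] × ℝ : t ≥ xᵀQx + (1 − z)(aᵀx)²/(1 + z·κ)} is a convex subset of ℝ^n × ℝ × ℝ. -/

import Mathlib

/-!
Write `q(x) = xᵀQx`, `s(x) = aᵀx` and `κ = aᵀQ⁻¹a`. Cauchy–Schwarz for the inner product defined
by `Q`, applied to `x` and `Q⁻¹a`, gives `s(x)² ≤ κ q(x)`. If `κ = 0` then `a = 0` and `T` is the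
epigraph of `q`. Otherwise `(1 - z)/(1 + zκ) = (1 + κ)/(κ(1 + zκ)) - 1/κ` splits the function
whose epigraph is `T` into `q(x) - s(x)²/κ`, a positive semidefinite quadratic form by the
Cauchy–Schwarz bound, and `(1 + κ)/κ` times `s(x)²/(1 + zκ)`, the perspective of a square
composed with affine maps; both are convex.
-/

open Matrix Set

lemma convexOn_sq_div {E : Type*} [AddCommGroup E] [Module ℝ E] (f d : E →ᵃ[ℝ] ℝ) :
    ConvexOn ℝ {x | 0 < d x} fun x => f x ^ 2 / d x := by
  refine ⟨(convex_Ioi 0).affine_preimage d, fun x hx y hy l m hl hm hlm => ?_⟩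
  simp only [mem_ofPred_eq, Convex.combo_affine_apply hlm, smul_eq_mul] at hx hy ⊢
  have hd : 0 < l * d x + m * d y := by
    rcases le_total (d x) (d y) with h | h
    · nlinarith [mul_le_mul_of_nonneg_left h hm]
    · nlinarith [mul_le_mul_of_nonneg_left h hl]
  obtain ⟨u, hu⟩ : ∃ u, f x = u * d x := ⟨f x / d x, by field_simp⟩
  obtain ⟨v, hv⟩ : ∃ v, f y = v * d y := ⟨f y / d y, by field_simp⟩
  have hxu : f x ^ 2 / d x = u ^ 2 * d x := by rw [hu]; field_simp
  have hyv : f y ^ 2 / d y = v ^ 2 * d y := by rw [hv]; field_simp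
  rw [hxu, hyv, hu, hv, div_le_iff₀ hd]
  -- `(p u + q v)² ≤ (p + q)(p u² + q v²)` for `p = l d x`, `q = m d y`
  nlinarith [mul_nonneg (mul_nonneg (mul_nonneg hl hm) (mul_nonneg hx.le hy.le))
    (sq_nonneg (u - v))]

lemma convexOn_sq_div_one_add_mul {E : Type*} [AddCommGroup E] [Module ℝ E] (s : E →ₗ[ℝ] ℝ)
    {κ : ℝ} (hκ : 0 ≤ κ) :
    ConvexOn ℝ (Prod.snd ⁻¹' Icc 0 1) fun p : E × ℝ => s p.1 ^ 2 / (1 + p.2 * κ) := by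
  let d : E × ℝ →ᵃ[ℝ] ℝ := AffineMap.const ℝ _ (1 : ℝ) + κ • (LinearMap.snd ℝ E ℝ).toAffineMap
  have hd : ∀ p, d p = 1 + p.2 * κ := fun p => by simp [d, mul_comm]
  refine (convexOn_sq_div (s ∘ₗ LinearMap.fst ℝ E ℝ).toAffineMap d).subset (fun p hp => ?_)
    ((convex_Icc 0 1).linear_preimage (LinearMap.snd ℝ E ℝ)) |>.congr fun p _ => by simp [hd]
  rw [mem_ofPred_eq, hd]
  have := hp.1
  positivity

section

variable {n : Type*} [Fintype n]

lemma Matrix.IsHermitian.dotProduct_mulVec_comm {M : Matrix n n ℝ} (hM : M.IsHermitian)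
    (x y : n → ℝ) : x ⬝ᵥ M *ᵥ y = y ⬝ᵥ M *ᵥ x := by
  rw [dotProduct_mulVec, ← mulVec_transpose, ← conjTranspose_eq_transpose_of_trivial, hM.eq,
    dotProduct_comm]

lemma Matrix.PosSemidef.sq_dotProduct_mulVec_le {M : Matrix n n ℝ} (hM : M.PosSemidef)
    (x y : n → ℝ) : (x ⬝ᵥ M *ᵥ y) ^ 2 ≤ (x ⬝ᵥ M *ᵥ x) * (y ⬝ᵥ M *ᵥ y) := by
  let := M.toSeminormedAddCommGroup hM
  let := M.toInnerProductSpace hM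
  have h : inner ℝ x y * inner ℝ x y ≤ inner ℝ x x * inner ℝ y y :=
    real_inner_mul_inner_self_le x y
  change (M *ᵥ y ⬝ᵥ star x) * (M *ᵥ y ⬝ᵥ star x) ≤ (M *ᵥ x ⬝ᵥ star x) * (M *ᵥ y ⬝ᵥ star y) at h
  simpa only [star_trivial, dotProduct_comm _ x, dotProduct_comm _ y, sq] using h

lemma Matrix.PosDef.sq_dotProduct_le [DecidableEq n] {Q : Matrix n n ℝ} (hQ : Q.PosDef)
    (a x : n → ℝ) : (a ⬝ᵥ x) ^ 2 ≤ (a ⬝ᵥ Q⁻¹ *ᵥ a) * (x ⬝ᵥ Q *ᵥ x) := by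
  have hQQ : Q *ᵥ (Q⁻¹ *ᵥ a) = a := by
    rw [mulVec_mulVec, mul_nonsing_inv _ (isUnit_iff_ne_zero.mpr hQ.det_pos.ne'), one_mulVec]
  have h := hQ.posSemidef.sq_dotProduct_mulVec_le x (Q⁻¹ *ᵥ a)
  rwa [hQQ, dotProduct_comm x, dotProduct_comm _ a, mul_comm] at h

lemma Matrix.dotProduct_sub_smul_vecMulVec_mulVec (Q : Matrix n n ℝ) (a x : n → ℝ) (c : ℝ) :
    x ⬝ᵥ (Q - c • vecMulVec a a) *ᵥ x = x ⬝ᵥ Q *ᵥ x - c * (a ⬝ᵥ x) ^ 2 := by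
  simp [sub_mulVec, smul_mulVec, vecMulVec_mulVec, dotProduct_comm x a, sq]

lemma Matrix.PosDef.posSemidef_sub_smul_vecMulVec [DecidableEq n] {Q : Matrix n n ℝ}
    (hQ : Q.PosDef) (a : n → ℝ) {c : ℝ} (hc₀ : 0 ≤ c) (hc : c * (a ⬝ᵥ Q⁻¹ *ᵥ a) ≤ 1) :
    (Q - c • vecMulVec a a).PosSemidef := by
  refine .of_dotProduct_mulVec_nonneg ?_ fun x => ?_
  · have h := (posSemidef_vecMulVec_self_star a).isHermitian
    rw [star_trivial] at h
    exact hQ.isHermitian.sub (h.smul (IsSelfAdjoint.all c))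
  · have hq : 0 ≤ x ⬝ᵥ Q *ᵥ x := by
      simpa only [star_trivial] using hQ.posSemidef.dotProduct_mulVec_nonneg x
    rw [star_trivial, dotProduct_sub_smul_vecMulVec_mulVec]
    nlinarith [hQ.sq_dotProduct_le a x, mul_le_mul_of_nonneg_right hc hq]

lemma Matrix.PosSemidef.convexOn_dotProduct_mulVec {M : Matrix n n ℝ} (hM : M.PosSemidef) :
    ConvexOn ℝ univ fun x : n → ℝ => x ⬝ᵥ M *ᵥ x := by
  refine ⟨convex_univ, fun x _ y _ l m hl hm hlm => ?_⟩
  have hxy : 0 ≤ (x - y) ⬝ᵥ M *ᵥ (x - y) := by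
    simpa only [star_trivial] using hM.dotProduct_mulVec_nonneg (x - y)
  obtain rfl : m = 1 - l := by linarith
  simp only [smul_eq_mul, mulVec_add, mulVec_smul, mulVec_sub, dotProduct_add, dotProduct_sub,
    add_dotProduct, sub_dotProduct, dotProduct_smul, smul_dotProduct,
    hM.isHermitian.dotProduct_mulVec_comm y x] at hxy ⊢
  -- `l q(x) + (1 - l) q(y) - q(l x + (1 - l) y) = l (1 - l) q(x - y)`
  nlinarith [mul_nonneg (mul_nonneg hl hm) hxy]

theorem Matrix.PosDef.convexOn_dotProduct_mulVec_add_sq_div [DecidableEq n] {Q : Matrix n n ℝ}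
    (hQ : Q.PosDef) (a : n → ℝ) :
    ConvexOn ℝ (Prod.snd ⁻¹' Icc 0 1) fun p : (n → ℝ) × ℝ =>
      p.1 ⬝ᵥ Q *ᵥ p.1 + (1 - p.2) * (a ⬝ᵥ p.1) ^ 2 / (1 + p.2 * (a ⬝ᵥ Q⁻¹ *ᵥ a)) := by
  set κ := a ⬝ᵥ Q⁻¹ *ᵥ a
  have hdom : Convex ℝ (Prod.snd ⁻¹' Icc 0 1 : Set ((n → ℝ) × ℝ)) :=
    (convex_Icc 0 1).linear_preimage (LinearMap.snd ℝ _ ℝ)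
  have hquad {M : Matrix n n ℝ} (hM : M.PosSemidef) :
      ConvexOn ℝ (Prod.snd ⁻¹' Icc 0 1) fun p : (n → ℝ) × ℝ => p.1 ⬝ᵥ M *ᵥ p.1 :=
    (hM.convexOn_dotProduct_mulVec.comp_linearMap (LinearMap.fst ℝ (n → ℝ) ℝ)).subset
      (subset_univ _) hdom
  have hκ : 0 ≤ κ := by
    simpa only [star_trivial] using hQ.inv.posSemidef.dotProduct_mulVec_nonneg a
  rcases hκ.eq_or_lt with hκ | hκ
  · obtain rfl : a = 0 := by
      by_contra ha
      have h := hQ.inv.dotProduct_mulVec_pos ha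
      rw [star_trivial] at h
      exact h.ne hκ
    simpa using hquad hQ.posSemidef
  have hsplit : ∀ z S : ℝ, 1 + z * κ ≠ 0 →
      (1 - z) * S ^ 2 / (1 + z * κ) = (1 + κ) / κ * (S ^ 2 / (1 + z * κ)) - κ⁻¹ * S ^ 2 := by
    intro z S hz
    field_simp
    ring
  refine ((hquad (hQ.posSemidef_sub_smul_vecMulVec a (inv_nonneg.mpr hκ.le)
    (inv_mul_cancel₀ hκ.ne').le)).add ((convexOn_sq_div_one_add_mul (dotProductBilin ℝ ℝ a)
    hκ.le).smul (c := (1 + κ) / κ) (by positivity))).congr fun p hp => ?_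
  have hd : 0 < 1 + p.2 * κ := by have := hp.1; positivity
  simp only [Pi.add_apply, smul_eq_mul, dotProduct_sub_smul_vecMulVec_mulVec,
    dotProductBilin_apply_apply, hsplit p.2 (a ⬝ᵥ p.1) hd.ne']
  ring

end

/-- The set `T = {(x,z,t) : z ∈ [0,1], t ≥ xᵀQx + (1-z)(aᵀx)²/(1 + zκ)}`,
with `κ = aᵀQ⁻¹a` and `Q ≻ 0`, is convex. -/
theorem T_convex
    (n : ℕ) (Q : Matrix (Fin n) (Fin n) ℝ) (hQ : Q.PosDef) (a : Fin n → ℝ) :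
    Convex ℝ
      {p : (Fin n → ℝ) × ℝ × ℝ |
        p.2.1 ∈ Set.Icc (0 : ℝ) 1 ∧
          p.1 ⬝ᵥ Q.mulVec p.1 +
            (1 - p.2.1) * (a ⬝ᵥ p.1) ^ 2 / (1 + p.2.1 * (a ⬝ᵥ Q⁻¹.mulVec a)) ≤ p.2.2} :=
  (hQ.convexOn_dotProduct_mulVec_add_sq_div a).convex_epigraph.linear_preimage
    (LinearEquiv.prodAssoc ℝ (Fin n → ℝ) ℝ ℝ).symm.toLinearMap
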